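/- Let f be a Gaussian field on ℝ^d satisfying the basic assumptions, ψ an admissible weight, ℓ ∈ ℝ, and let (u_n)_{n∈ℕ} be a superadditive sequence of reals (u_{n+m} ≥ u_n + u_m) with u_n ≥ n for all n. Then there exists a constant C > 0 such that for every n ∈ ℕ, every x with |x| = n and every r ≥ 1, E_r[T^{B_{u_n}}(0,x)] ≤ C·n, where E_r denotes expectation when the finite-range field f_r is used in place of f. -/

import Mathlib

open MeasureTheory ProbabilityTheory Filter Set

noncomputable section

namespace GFPP

/-- The Euclidean norm on `Fin d → ℝ` (whose default norm is the sup norm). -/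
def euclNorm {d : ℕ} (v : Fin d → ℝ) : ℝ := Real.sqrt (∑ i, (v i) ^ 2)

/-- An admissible weight function. -/
structure AdmissibleWeight (ψ : ℝ → ℝ) : Prop where
  measurable : Measurable ψ
  nonneg : ∀ x, 0 ≤ ψ x
  mono : Monotone ψ
  sublinear : ∃ C > 0, ∀ x ≥ 1, ψ x ≤ C * x
  pos_iff : ∀ x, 0 < ψ x ↔ 0 < x

/-- Arclength line integral of `ψ (h + ℓ)` along one affine segment from `a` to `b`. -/
def segTime {d : ℕ} (ψ : ℝ → ℝ) (ℓ : ℝ) (h : (Fin d → ℝ) → ℝ) (a b : Fin d → ℝ) : ℝ :=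
  (∫ t in (0:ℝ)..1, ψ (h ((1 - t) • a + t • b) + ℓ)) * euclNorm (b - a)

/-- Time of a piecewise affine path recorded by its (nonempty) list of vertices. -/
def polyTime {d : ℕ} (ψ : ℝ → ℝ) (ℓ : ℝ) (h : (Fin d → ℝ) → ℝ) (p : List (Fin d → ℝ)) : ℝ :=
  ((p.zip p.tail).map fun ab => segTime ψ ℓ h ab.1 ab.2).sum

/-- The image (trace) of a piecewise affine path. -/
def polySet {d : ℕ} (p : List (Fin d → ℝ)) : Set (Fin d → ℝ) :=
  {x | x ∈ p} ∪ ⋃ ab ∈ p.zip p.tail, segment ℝ ab.1 ab.2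

/-- Restricted passage time between `A` and `B`, over piecewise affine paths staying in `S`. -/
def restrTime {d : ℕ} (ψ : ℝ → ℝ) (ℓ : ℝ) (h : (Fin d → ℝ) → ℝ)
    (S A B : Set (Fin d → ℝ)) : ℝ :=
  sInf {t | ∃ p : List (Fin d → ℝ), ∃ hp : p ≠ [],
    p.head hp ∈ A ∧ p.getLast hp ∈ B ∧ polySet p ⊆ S ∧ polyTime ψ ℓ h p = t}

/-- Passage time between `A` and `B`. -/
def time {d : ℕ} (ψ : ℝ → ℝ) (ℓ : ℝ) (h : (Fin d → ℝ) → ℝ) (A B : Set (Fin d → ℝ)) : ℝ :=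
  restrTime ψ ℓ h Set.univ A B

/-- Crossing time `T(A_r)` of the (sup-norm) annulus of radii `1` and `r` centered at `0`. -/
def annulusTime {d : ℕ} (ψ : ℝ → ℝ) (ℓ : ℝ) (h : (Fin d → ℝ) → ℝ) (r : ℝ) : ℝ :=
  time ψ ℓ h (Metric.sphere (0 : Fin d → ℝ) 1) (Metric.sphere (0 : Fin d → ℝ) r)

/-- The moving-average covariance kernel `κ(x,y) = ∫ q(x-u) q(y-u) du`. -/
def movKernel {d : ℕ} (q : (Fin d → ℝ) → ℝ) (x y : Fin d → ℝ) : ℝ :=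
  ∫ u, q (x - u) * q (y - u)

/-- A (sample-path continuous) centered Gaussian field with moving-average kernel `q`:
every finite linear combination of values is a centered Gaussian variable with the
variance prescribed by the kernel. -/
structure IsGaussianField {d : ℕ} {Ω : Type*} [MeasurableSpace Ω] (P : Measure Ω)
    (f : Ω → (Fin d → ℝ) → ℝ) (q : (Fin d → ℝ) → ℝ) : Prop where
  cont : ∀ ω, Continuous (f ω)
  meas : ∀ x, Measurable fun ω => f ω x
  gaussian : ∀ (n : ℕ) (a : Fin n → ℝ) (x : Fin n → Fin d → ℝ),
    P.map (fun ω => ∑ i, a i * f ω (x i)) =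
      gaussianReal 0 ((∑ i, ∑ j, a i * a j * movKernel q (x i) (x j)).toNNReal)

/-- `F` is `α`-sub-exponential. -/
def SubExp (α : ℝ) (F : ℝ → ℝ) : Prop :=
  Tendsto (fun x : ℝ => Real.exp (x ^ α) * F x) atTop (nhds 0)

/-- `G` is `β`-sub-polynomial. -/
def SubPoly (β : ℝ) (G : ℝ → ℝ) : Prop :=
  Tendsto (fun x : ℝ => x ^ β * G x) atTop (nhds 0)

/-- The basic assumptions on the Gaussian field `f` with moving-average kernel `q`
and decay function `F`. -/
structure BasicAssumptions {d : ℕ} {Ω : Type*} [MeasurableSpace Ω] (P : Measure Ω)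
    (f : Ω → (Fin d → ℝ) → ℝ) (q : (Fin d → ℝ) → ℝ) (F : ℝ → ℝ) : Prop where
  gaussField : IsGaussianField P f q
  stationary : ∀ v : Fin d → ℝ,
    P.map (fun ω => fun x => f ω (x + v)) = P.map (fun ω => f ω)
  ergodic : ∀ A : Set ((Fin d → ℝ) → ℝ), MeasurableSet A →
    (∀ v : Fin d → ℝ, (fun g : (Fin d → ℝ) → ℝ => fun x => g (x + v)) ⁻¹' A = A) →
    P ((fun ω => f ω) ⁻¹' A) = 0 ∨ P ((fun ω => f ω) ⁻¹' A) = 1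
  q_mem_L1 : Integrable q volume
  q_mem_L2 : MemLp q 2 volume
  q_smooth : ContDiff ℝ 3 q
  deriv_mem_L2 : ∀ k : ℕ, k ≤ 3 → MemLp (fun x => iteratedFDeriv ℝ k q x) 2 volume
  F_tendsto : Tendsto F atTop (nhds 0)
  decay₀ : ∀ x : ℝ, 0 ≤ x →
    (∫ u in {u : Fin d → ℝ | x ≤ ‖u‖}, (q u) ^ 2) ^ (1/2 : ℝ) ≤ F x
  decay₁ : ∀ i : Fin d, ∀ x : ℝ, 0 ≤ x →
    (∫ u in {u : Fin d → ℝ | x ≤ ‖u‖}, (fderiv ℝ q u (Pi.single i 1)) ^ 2) ^ (1/2 : ℝ) ≤ F x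
  symm_perm : ∀ (σ : Equiv.Perm (Fin d)) (x : Fin d → ℝ), q (x ∘ σ) = q x
  symm_sign : ∀ s : Fin d → ℝ, (∀ i, s i = 1 ∨ s i = -1) →
    ∀ x : Fin d → ℝ, q (fun i => s i * x i) = q x
  int_pos : 0 < ∫ u, q u

/-- A smooth cutoff function. -/
structure IsCutoff (φ : ℝ → ℝ) : Prop where
  smooth : ContDiff ℝ (⊤ : ℕ∞) φ
  nonneg : ∀ x, 0 ≤ φ x
  supp : ∀ x, φ x ≠ 0 → x ∈ Set.Icc (-1 : ℝ) 1
  eq_one : ∀ x ∈ Set.Icc (-(1:ℝ)/2) (1/2), φ x = 1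

/-- The truncated moving-average kernel `q_r(x) = φ(‖x‖₂ / r) q(x)`. -/
def cutKernel {d : ℕ} (φ : ℝ → ℝ) (r : ℝ) (q : (Fin d → ℝ) → ℝ) : (Fin d → ℝ) → ℝ :=
  fun x => φ (euclNorm x / r) * q x

/-- The macroscopic annulus times condition. -/
def MacroAnnulusCondition {d : ℕ} {Ω : Type*} [MeasurableSpace Ω] (P : Measure Ω)
    (f : Ω → (Fin d → ℝ) → ℝ) (ψ : ℝ → ℝ) (ℓ : ℝ) : Prop :=
  ∃ a > 0, ∃ G : ℝ → ℝ, SubPoly (max (2 * (d : ℝ)) 4) G ∧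
    ∀ N : ℝ, 1 ≤ N →
      P {ω | annulusTime ψ ℓ (f ω) N ≤ a * N} ≤ ENNReal.ofReal (G N)

/-- The critical level `ℓ_c(f)` for percolation of excursion sets. -/
def criticalLevel {d : ℕ} {Ω : Type*} [MeasurableSpace Ω] (P : Measure Ω)
    (f : Ω → (Fin d → ℝ) → ℝ) : ℝ :=
  sSup {ℓ : ℝ | P {ω | ∃ x : Fin d → ℝ, -ℓ ≤ f ω x ∧
    ¬ Bornology.IsBounded (connectedComponentIn {y | -ℓ ≤ f ω y} x)} = 0}


/- ----------------------------------------------------------------- -/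
/- Auxiliary lemmas -/

private lemma aux_int_Ioi {b : ℝ} (hb : 0 < b) :
    ∫ t in Set.Ioi (0:ℝ), t * Real.exp (-b * t ^ 2) = (2 * b)⁻¹ := by
  have hb' : (2:ℝ) * b ≠ 0 := by positivity
  have A : ∀ t : ℝ, HasDerivAt (fun s => -(2 * b)⁻¹ * Real.exp (-b * s ^ 2))
      (t * Real.exp (-b * t ^ 2)) t := by
    intro t
    convert (((hasDerivAt_pow 2 t).const_mul (-b)).exp.const_mul (-(2 * b)⁻¹)) using 1
    · rfl
    · rfl
    field_simp
    ring
  have B : Tendsto (fun y : ℝ => -(2 * b)⁻¹ * Real.exp (-b * y ^ 2)) atTop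
      (nhds (-(2 * b)⁻¹ * 0)) := by
    refine Tendsto.const_mul _ ?_
    exact Real.tendsto_exp_atBot.comp
      ((tendsto_pow_atTop two_ne_zero).const_mul_atTop_of_neg (neg_lt_zero.2 hb))
  have key := MeasureTheory.integral_Ioi_of_hasDerivAt_of_tendsto'
    (fun t (_ : t ∈ Set.Ici (0:ℝ)) => A t)
    (integrable_mul_exp_neg_mul_sq hb).integrableOn B
  rw [key]
  norm_num

private lemma aux_int_abs {b : ℝ} (hb : 0 < b) :
    ∫ t : ℝ, |t| * Real.exp (-b * t ^ 2) = b⁻¹ := by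
  have h1 : (∫ t : ℝ, |t| * Real.exp (-b * t ^ 2))
      = ∫ t : ℝ, (fun s => s * Real.exp (-b * s ^ 2)) |t| := by
    congr 1
    funext t
    simp [sq_abs]
  rw [h1, integral_comp_abs (f := fun s => s * Real.exp (-b * s ^ 2)),
    aux_int_Ioi hb, mul_inv]
  rw [← mul_assoc]
  norm_num

private lemma gauss_abs (v : NNReal) :
    ∫⁻ s, ENNReal.ofReal |s| ∂(gaussianReal 0 v) ≤ ENNReal.ofReal (Real.sqrt v) := by
  rcases eq_or_ne v 0 with hv | hv
  · subst hv
    rw [gaussianReal_zero_var, lintegral_dirac' _ (measurable_abs.ennreal_ofReal)]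
    simp
  · have hw : 0 < (v:ℝ) := by
      have := (pos_iff_ne_zero (a := v)).2 hv
      exact_mod_cast this
    have hb : 0 < (2 * (v:ℝ))⁻¹ := by positivity
    rw [gaussianReal_of_var_ne_zero 0 hv,
      lintegral_withDensity_eq_lintegral_mul _ (measurable_gaussianPDF 0 v)
        measurable_abs.ennreal_ofReal]
    have hpdf_eq : ∀ t : ℝ, gaussianPDFReal 0 v t * |t|
        = (Real.sqrt (2 * Real.pi * (v:ℝ)))⁻¹ * (|t| * Real.exp (-(2 * (v:ℝ))⁻¹ * t ^ 2)) := by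
      intro t
      have hexp : Real.exp (-(t - 0) ^ 2 / (2 * (v:ℝ))) = Real.exp (-(2 * (v:ℝ))⁻¹ * t ^ 2) := by
        congr 1
        ring
      rw [gaussianPDFReal, hexp]
      ring
    have habs : (fun t : ℝ => |t| * Real.exp (-(2 * (v:ℝ))⁻¹ * t ^ 2))
        = fun t : ℝ => |t * Real.exp (-(2 * (v:ℝ))⁻¹ * t ^ 2)| := by
      funext t
      rw [abs_mul, abs_of_pos (Real.exp_pos _)]
    have hInt : MeasureTheory.Integrable (fun t => gaussianPDFReal 0 v t * |t|) := by
      simp only [hpdf_eq]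
      refine MeasureTheory.Integrable.const_mul ?_ _
      rw [habs]
      exact (integrable_mul_exp_neg_mul_sq hb).abs
    have hnn : ∀ t : ℝ, 0 ≤ gaussianPDFReal 0 v t * |t| :=
      fun t => mul_nonneg (gaussianPDFReal_nonneg _ _ _) (abs_nonneg _)
    have hstep : ∀ t : ℝ, gaussianPDF 0 v t * ENNReal.ofReal |t|
        = ENNReal.ofReal (gaussianPDFReal 0 v t * |t|) := by
      intro t
      rw [gaussianPDF, ← ENNReal.ofReal_mul (gaussianPDFReal_nonneg _ _ _)]
    calc ∫⁻ t, (gaussianPDF 0 v * fun s => ENNReal.ofReal |s|) t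
        = ∫⁻ t, ENNReal.ofReal (gaussianPDFReal 0 v t * |t|) := by
          refine lintegral_congr fun t => ?_
          exact hstep t
      _ = ENNReal.ofReal (∫ t, gaussianPDFReal 0 v t * |t|) :=
          (MeasureTheory.ofReal_integral_eq_lintegral_ofReal hInt
            (Filter.Eventually.of_forall hnn)).symm
      _ ≤ ENNReal.ofReal (Real.sqrt v) := by
          apply ENNReal.ofReal_le_ofReal
          have hInt_eq : (∫ t, gaussianPDFReal 0 v t * |t|)
              = (Real.sqrt (2 * Real.pi * (v:ℝ)))⁻¹ * (2 * (v:ℝ)) := by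
            simp only [hpdf_eq]
            rw [MeasureTheory.integral_const_mul, aux_int_abs hb, inv_inv]
          rw [hInt_eq]
          have h4 : Real.sqrt (4 * (v:ℝ)) ≤ Real.sqrt (2 * Real.pi * (v:ℝ)) := by
            apply Real.sqrt_le_sqrt
            nlinarith [Real.pi_gt_three]
          have h4' : Real.sqrt (4 * (v:ℝ)) = 2 * Real.sqrt (v:ℝ) := by
            rw [show (4:ℝ) * (v:ℝ) = (2 * Real.sqrt (v:ℝ)) ^ 2 by
              rw [mul_pow, Real.sq_sqrt hw.le]; norm_num]
            exact Real.sqrt_sq (by positivity)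
          have hsq : 0 < Real.sqrt (v:ℝ) := Real.sqrt_pos.2 hw
          calc (Real.sqrt (2 * Real.pi * (v:ℝ)))⁻¹ * (2 * (v:ℝ))
              ≤ (2 * Real.sqrt (v:ℝ))⁻¹ * (2 * (v:ℝ)) := by
                apply mul_le_mul_of_nonneg_right _ (by positivity)
                apply inv_anti₀ (by positivity)
                rw [← h4']; exact h4
            _ = (v:ℝ) / Real.sqrt (v:ℝ) := by
                field_simp
            _ = Real.sqrt (v:ℝ) := Real.div_sqrt

private lemma polyTime_nonneg {d : ℕ} {ψ : ℝ → ℝ} (hψ : AdmissibleWeight ψ) (ℓ : ℝ)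
    (h : (Fin d → ℝ) → ℝ) (p : List (Fin d → ℝ)) : 0 ≤ polyTime ψ ℓ h p := by
  apply List.sum_nonneg
  intro a ha
  obtain ⟨ab, -, rfl⟩ := List.mem_map.1 ha
  exact mul_nonneg
    (intervalIntegral.integral_nonneg zero_le_one fun s _ => hψ.nonneg _)
    (Real.sqrt_nonneg _)

private lemma restrTime_nonneg {d : ℕ} {ψ : ℝ → ℝ} (hψ : AdmissibleWeight ψ) (ℓ : ℝ)
    (h : (Fin d → ℝ) → ℝ) (S A B : Set (Fin d → ℝ)) : 0 ≤ restrTime ψ ℓ h S A B := by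
  apply Real.sInf_nonneg
  rintro t ⟨p, hp, -, -, -, rfl⟩
  exact polyTime_nonneg hψ ℓ h p

private lemma restrTime_le {d : ℕ} {ψ : ℝ → ℝ} (hψ : AdmissibleWeight ψ) (ℓ : ℝ)
    (h : (Fin d → ℝ) → ℝ) (S A B : Set (Fin d → ℝ)) (p : List (Fin d → ℝ)) (hp : p ≠ [])
    (h1 : p.head hp ∈ A) (h2 : p.getLast hp ∈ B) (h3 : polySet p ⊆ S) :
    restrTime ψ ℓ h S A B ≤ polyTime ψ ℓ h p := by
  apply csInf_le
  · exact ⟨0, by rintro t ⟨p', hp', -, -, -, rfl⟩; exact polyTime_nonneg hψ ℓ h p'⟩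
  · exact ⟨p, hp, h1, h2, h3, rfl⟩

/-- Lemma (linear bound on the expected restricted passage time, uniformly in the
correlation range). -/
theorem expectation_linear_bound {d : ℕ} {Ω : Type*} [MeasurableSpace Ω] (P : Measure Ω)
    [IsProbabilityMeasure P] (f : Ω → (Fin d → ℝ) → ℝ) (q : (Fin d → ℝ) → ℝ) (F : ℝ → ℝ)
    (ψ : ℝ → ℝ) (ℓ : ℝ) (φ : ℝ → ℝ) (hφ : IsCutoff φ)
    (hf : BasicAssumptions P f q F) (hψ : AdmissibleWeight ψ)
    (u : ℕ → ℝ) (hsuper : ∀ n m, u n + u m ≤ u (n + m)) (hlin : ∀ n : ℕ, (n : ℝ) ≤ u n) :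
    ∃ C > 0, ∀ n : ℕ, ∀ x : Fin d → ℝ, ‖x‖ = n → ∀ r : ℝ, 1 ≤ r →
      ∀ (Ω' : Type*) [MeasurableSpace Ω'] (P' : Measure Ω') [IsProbabilityMeasure P']
        (fr : Ω' → (Fin d → ℝ) → ℝ), IsGaussianField P' fr (cutKernel φ r q) →
        (∫ ω, restrTime ψ ℓ (fr ω) (Metric.closedBall (0 : Fin d → ℝ) (u n)) {0} {x} ∂P')
          ≤ C * n := by
  classical
  obtain ⟨Cψ, hCψ, hCle⟩ := hψ.sublinear
  -- a uniform bound for φ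
  obtain ⟨M, hM1, hM⟩ : ∃ M : ℝ, 1 ≤ M ∧ ∀ s : ℝ, φ s ≤ M := by
    obtain ⟨s0, hs0mem, hs0⟩ := isCompact_Icc.exists_isMaxOn
      (Set.nonempty_Icc.mpr (by norm_num : (-1:ℝ) ≤ 1))
      (hφ.smooth.continuous.continuousOn (s := Set.Icc (-1:ℝ) 1))
    refine ⟨max (φ s0) 1, le_max_right _ _, fun s => ?_⟩
    by_cases hs : φ s = 0
    · rw [hs]; exact le_trans zero_le_one (le_max_right _ _)
    · exact le_max_of_le_left (hs0 (hφ.supp s hs))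
  have hM0 : 0 ≤ M := le_trans zero_le_one hM1
  set V : ℝ := M ^ 2 * ∫ u : Fin d → ℝ, (q u) ^ 2 with hVdef
  have hV0 : 0 ≤ V := mul_nonneg (sq_nonneg M) (integral_nonneg fun u => sq_nonneg _)
  refine ⟨Cψ * (1 + |ℓ| + Real.sqrt V) * (Real.sqrt d + 1), ?_, ?_⟩
  · have h1 : (0:ℝ) < 1 + |ℓ| + Real.sqrt V := by positivity
    have h2 : (0:ℝ) < Real.sqrt d + 1 := by positivity
    exact mul_pos (mul_pos hCψ h1) h2
  intro n x hx r hr Ω' _ P' _ fr hfr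
  -- kernel bound
  have hqr_bound : ∀ y : Fin d → ℝ, ((movKernel (cutKernel φ r q) y y).toNNReal : ℝ) ≤ V := by
    intro y
    have hq2 : MeasureTheory.Integrable (fun u : Fin d → ℝ => (q u) ^ 2) :=
      hf.q_mem_L2.integrable_sq
    have hint2 : MeasureTheory.Integrable (fun u : Fin d → ℝ => M ^ 2 * (q (y - u)) ^ 2) :=
      (hq2.comp_sub_left y).const_mul _
    have hker : movKernel (cutKernel φ r q) y y ≤ V := by
      have hmono : ∀ u : Fin d → ℝ,
          cutKernel φ r q (y - u) * cutKernel φ r q (y - u) ≤ M ^ 2 * (q (y - u)) ^ 2 := by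
        intro u
        have h0 : 0 ≤ φ (euclNorm (y - u) / r) := hφ.nonneg _
        have h1 : φ (euclNorm (y - u) / r) ≤ M := hM _
        show (φ (euclNorm (y - u) / r) * q (y - u)) * (φ (euclNorm (y - u) / r) * q (y - u))
          ≤ M ^ 2 * (q (y - u)) ^ 2
        nlinarith [mul_le_mul h1 h1 h0 hM0, sq_nonneg (q (y - u))]
      calc movKernel (cutKernel φ r q) y y
          ≤ ∫ u : Fin d → ℝ, M ^ 2 * (q (y - u)) ^ 2 :=
            MeasureTheory.integral_mono_of_nonneg
              (Filter.Eventually.of_forall fun u => mul_self_nonneg _)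
              hint2 (Filter.Eventually.of_forall hmono)
        _ = M ^ 2 * ∫ u : Fin d → ℝ, (q (y - u)) ^ 2 := MeasureTheory.integral_const_mul _ _
        _ = V := by
            rw [hVdef, MeasureTheory.integral_sub_left_eq_self
              (fun u : Fin d → ℝ => (q u) ^ 2) volume y]
    calc ((movKernel (cutKernel φ r q) y y).toNNReal : ℝ)
        = max (movKernel (cutKernel φ r q) y y) 0 := Real.coe_toNNReal' _
      _ ≤ V := max_le hker hV0
  -- the key Gaussian bound
  have key : ∀ y : Fin d → ℝ,
      ∫⁻ ω, ENNReal.ofReal |fr ω y| ∂P' ≤ ENNReal.ofReal (Real.sqrt V) := by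
    intro y
    have hmap := hfr.gaussian 1 (fun _ => 1) (fun _ => y)
    simp only [Fin.sum_univ_one, one_mul] at hmap
    rw [← MeasureTheory.lintegral_map measurable_abs.ennreal_ofReal (hfr.meas y), hmap]
    exact le_trans (gauss_abs _)
      (ENNReal.ofReal_le_ofReal (Real.sqrt_le_sqrt (hqr_bound y)))
  -- joint measurability in (t, ω)
  have hu_cont : ∀ ω, Continuous fun t : ℝ => fr ω (t • x) :=
    fun ω => (hfr.cont ω).comp (continuous_id.smul continuous_const)
  have hJ : Measurable (Function.uncurry fun (t : ℝ) (ω : Ω') => fr ω (t • x)) :=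
    measurable_uncurry_of_continuous_of_measurable hu_cont (fun t => hfr.meas _)
  set L : Ω' → ENNReal :=
    fun ω => ∫⁻ t in Set.Ioc (0:ℝ) 1, ENNReal.ofReal |fr ω (t • x)| with hLdef
  have hLm : Measurable L := by
    apply Measurable.lintegral_prod_left
    exact (hJ.abs).ennreal_ofReal
  have hswap : ∫⁻ ω, L ω ∂P'
      = ∫⁻ t in Set.Ioc (0:ℝ) 1, ∫⁻ ω, ENNReal.ofReal |fr ω (t • x)| ∂P' := by
    exact MeasureTheory.lintegral_lintegral_swap
      (((hJ.comp measurable_swap).abs).ennreal_ofReal).aemeasurable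
  have hLbound : ∫⁻ ω, L ω ∂P' ≤ ENNReal.ofReal (Real.sqrt V) := by
    rw [hswap]
    calc ∫⁻ t in Set.Ioc (0:ℝ) 1, ∫⁻ ω, ENNReal.ofReal |fr ω (t • x)| ∂P'
        ≤ ∫⁻ _ in Set.Ioc (0:ℝ) 1, ENNReal.ofReal (Real.sqrt V) :=
          MeasureTheory.lintegral_mono fun t => key _
      _ = ENNReal.ofReal (Real.sqrt V) := by
          rw [MeasureTheory.setLIntegral_const]
          simp [Real.volume_Ioc]
  set A : Ω' → ℝ := fun ω => (L ω).toReal with hAdef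
  have hA_nonneg : ∀ ω, 0 ≤ A ω := fun ω => ENNReal.toReal_nonneg
  have hA_meas : Measurable A := hLm.ennreal_toReal
  have hA_eq : ∀ ω, (∫ t in (0:ℝ)..1, |fr ω (t • x)|) = A ω := by
    intro ω
    rw [intervalIntegral.integral_of_le zero_le_one,
      MeasureTheory.integral_eq_lintegral_of_nonneg_ae
        (Filter.Eventually.of_forall fun t => abs_nonneg _)
        ((hu_cont ω).abs.aestronglyMeasurable)]
  have hA_int : MeasureTheory.Integrable A P' := by
    refine ⟨hA_meas.aestronglyMeasurable, ?_⟩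
    refine lt_of_le_of_lt ?_ (lt_of_le_of_lt hLbound ENNReal.ofReal_lt_top)
    apply MeasureTheory.lintegral_mono
    intro ω
    show ‖A ω‖ₑ ≤ L ω
    rw [Real.enorm_eq_ofReal (hA_nonneg ω)]
    exact ENNReal.ofReal_toReal_le
  have hA_int_bound : ∫ ω, A ω ∂P' ≤ Real.sqrt V := by
    rw [MeasureTheory.integral_eq_lintegral_of_nonneg_ae
      (Filter.Eventually.of_forall hA_nonneg) hA_meas.aestronglyMeasurable]
    have hle : ∫⁻ ω, ENNReal.ofReal (A ω) ∂P' ≤ ENNReal.ofReal (Real.sqrt V) :=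
      le_trans (MeasureTheory.lintegral_mono fun ω => ENNReal.ofReal_toReal_le) hLbound
    calc (∫⁻ ω, ENNReal.ofReal (A ω) ∂P').toReal
        ≤ (ENNReal.ofReal (Real.sqrt V)).toReal :=
          ENNReal.toReal_mono ENNReal.ofReal_ne_top hle
      _ = Real.sqrt V := ENNReal.toReal_ofReal (Real.sqrt_nonneg V)
  -- pointwise bound for the restricted time
  have hψbound : ∀ w : ℝ, ψ (w + ℓ) ≤ Cψ * (1 + |ℓ|) + Cψ * |w| := by
    intro w
    rcases le_or_gt 1 (w + ℓ) with h | h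
    · calc ψ (w + ℓ) ≤ Cψ * (w + ℓ) := hCle _ h
        _ ≤ Cψ * (1 + |ℓ|) + Cψ * |w| := by
            nlinarith [abs_nonneg w, abs_nonneg ℓ, le_abs_self w, le_abs_self ℓ]
    · calc ψ (w + ℓ) ≤ ψ 1 := hψ.mono h.le
        _ ≤ Cψ * 1 := hCle 1 le_rfl
        _ ≤ Cψ * (1 + |ℓ|) + Cψ * |w| := by
            nlinarith [abs_nonneg w, abs_nonneg ℓ]
  have hn0 : (0:ℝ) ≤ (n:ℝ) := Nat.cast_nonneg n
  have hun : (n:ℝ) ≤ u n := hlin n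
  have hpt : ∀ ω, restrTime ψ ℓ (fr ω) (Metric.closedBall (0 : Fin d → ℝ) (u n)) {0} {x}
      ≤ Cψ * ((1 + |ℓ|) + A ω) * ((Real.sqrt d + 1) * n) := by
    intro ω
    have hpne : ([0, x] : List (Fin d → ℝ)) ≠ [] := by simp
    have hhead : ([0, x] : List (Fin d → ℝ)).head hpne ∈ ({0} : Set (Fin d → ℝ)) := rfl
    have hlast : ([0, x] : List (Fin d → ℝ)).getLast hpne ∈ ({x} : Set (Fin d → ℝ)) := rfl
    have hsubset : polySet ([0, x]) ⊆ Metric.closedBall (0 : Fin d → ℝ) (u n) := by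
      intro z hz
      rw [mem_closedBall_zero_iff]
      have hxn : ‖x‖ ≤ u n := by rw [hx]; exact hun
      rcases hz with hz | hz
      · have hz' : z = 0 ∨ z = x := by simpa using hz
        rcases hz' with rfl | rfl
        · simpa using le_trans hn0 hun
        · exact hxn
      · simp only [Set.mem_iUnion] at hz
        obtain ⟨ab, hab, hzseg⟩ := hz
        have hab' : ab = ((0 : Fin d → ℝ), x) := by
          simpa [List.zip] using hab
        subst hab'
        rw [segment_eq_image] at hzseg
        obtain ⟨θ, hθ, rfl⟩ := hzseg
        show ‖(1 - θ) • (0 : Fin d → ℝ) + θ • x‖ ≤ u n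
        have heq : (1 - θ) • (0 : Fin d → ℝ) + θ • x = θ • x := by simp
        rw [heq, norm_smul]
        calc ‖θ‖ * ‖x‖ ≤ 1 * ‖x‖ :=
              mul_le_mul_of_nonneg_right (abs_le.2 ⟨le_trans (by norm_num) hθ.1, hθ.2⟩)
                (norm_nonneg x)
          _ = ‖x‖ := one_mul _
          _ ≤ u n := hxn
    refine le_trans (restrTime_le hψ ℓ (fr ω) _ _ _ ([0, x]) hpne hhead hlast hsubset) ?_
    have hpt_eq : polyTime ψ ℓ (fr ω) ([0, x]) = segTime ψ ℓ (fr ω) 0 x := by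
      simp [polyTime]
    rw [hpt_eq, segTime]
    have hsimp : ∀ t : ℝ, ((1 - t) • (0 : Fin d → ℝ) + t • x) = t • x := fun t => by simp
    have hcont1 : Continuous fun t : ℝ => |fr ω (t • x)| := (hu_cont ω).abs
    have hII_g : IntervalIntegrable
        (fun t : ℝ => Cψ * (1 + |ℓ|) + Cψ * |fr ω (t • x)|) volume 0 1 :=
      (continuous_const.add (continuous_const.mul hcont1)).intervalIntegrable _ _
    have hII_f : IntervalIntegrable
        (fun t : ℝ => ψ (fr ω ((1 - t) • (0 : Fin d → ℝ) + t • x) + ℓ)) volume 0 1 := by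
      rw [intervalIntegrable_iff]
      have hcont2 : Continuous fun t : ℝ =>
          fr ω ((1 - t) • (0 : Fin d → ℝ) + t • x) + ℓ :=
        ((hfr.cont ω).comp (((continuous_const.sub continuous_id).smul continuous_const).add
          (continuous_id.smul continuous_const))).add continuous_const
      refine MeasureTheory.Integrable.mono' (intervalIntegrable_iff.1 hII_g)
        ((hψ.measurable.comp hcont2.measurable).aestronglyMeasurable) ?_
      refine Filter.Eventually.of_forall fun t => ?_
      rw [Real.norm_eq_abs, abs_of_nonneg (hψ.nonneg _), hsimp t]
      exact hψbound _
    have hIbound : (∫ t in (0:ℝ)..1, ψ (fr ω ((1 - t) • (0 : Fin d → ℝ) + t • x) + ℓ))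
        ≤ Cψ * ((1 + |ℓ|) + A ω) := by
      calc (∫ t in (0:ℝ)..1, ψ (fr ω ((1 - t) • (0 : Fin d → ℝ) + t • x) + ℓ))
          ≤ ∫ t in (0:ℝ)..1, (Cψ * (1 + |ℓ|) + Cψ * |fr ω (t • x)|) := by
            refine intervalIntegral.integral_mono_on zero_le_one hII_f hII_g fun t _ => ?_
            rw [hsimp t]
            exact hψbound _
        _ = Cψ * (1 + |ℓ|) + Cψ * A ω := by
            rw [intervalIntegral.integral_add (g := fun t => Cψ * |fr ω (t • x)|)
              (intervalIntegrable_const)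
              ((continuous_const.mul hcont1).intervalIntegrable _ _),
              intervalIntegral.integral_const, intervalIntegral.integral_const_mul, hA_eq ω]
            simp
        _ = Cψ * ((1 + |ℓ|) + A ω) := by ring
    have hEucl : euclNorm (x - 0) ≤ (Real.sqrt d + 1) * n := by
      rw [sub_zero]
      have h1 : euclNorm x ≤ Real.sqrt d * n := by
        rw [euclNorm]
        calc Real.sqrt (∑ i, (x i) ^ 2)
            ≤ Real.sqrt (∑ _i : Fin d, (n:ℝ) ^ 2) := by
              apply Real.sqrt_le_sqrt
              refine Finset.sum_le_sum fun i _ => ?_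
              calc (x i) ^ 2 = |x i| ^ 2 := (sq_abs _).symm
                _ ≤ (n:ℝ) ^ 2 := by
                    refine pow_le_pow_left₀ (abs_nonneg _) ?_ 2
                    calc |x i| = ‖x i‖ := (Real.norm_eq_abs _).symm
                      _ ≤ ‖x‖ := norm_le_pi_norm x i
                      _ = (n:ℝ) := hx
          _ = Real.sqrt ((d:ℝ) * (n:ℝ) ^ 2) := by
              rw [Finset.sum_const, Finset.card_univ, Fintype.card_fin, nsmul_eq_mul]
          _ = Real.sqrt d * n := by
              rw [Real.sqrt_mul (Nat.cast_nonneg d), Real.sqrt_sq (Nat.cast_nonneg n)]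
      have h2 : Real.sqrt d * n ≤ (Real.sqrt d + 1) * n := by nlinarith
      linarith
    have hInn : 0 ≤ Cψ * ((1 + |ℓ|) + A ω) :=
      mul_nonneg hCψ.le (add_nonneg (by positivity) (hA_nonneg ω))
    exact mul_le_mul hIbound hEucl (Real.sqrt_nonneg _) hInn
  -- integrate the pointwise bound
  have h_int : MeasureTheory.Integrable
      (fun ω => Cψ * ((1 + |ℓ|) + A ω) * ((Real.sqrt d + 1) * n)) P' := by
    have h1 : MeasureTheory.Integrable (fun ω => (1 + |ℓ|) + A ω) P' :=
      (MeasureTheory.integrable_const _).add hA_int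
    exact (h1.const_mul Cψ).mul_const _
  calc (∫ ω, restrTime ψ ℓ (fr ω) (Metric.closedBall (0 : Fin d → ℝ) (u n)) {0} {x} ∂P')
      ≤ ∫ ω, Cψ * ((1 + |ℓ|) + A ω) * ((Real.sqrt d + 1) * n) ∂P' :=
        MeasureTheory.integral_mono_of_nonneg
          (Filter.Eventually.of_forall fun ω => restrTime_nonneg hψ ℓ (fr ω) _ _ _)
          h_int (Filter.Eventually.of_forall hpt)
    _ = Cψ * ((1 + |ℓ|) + ∫ ω, A ω ∂P') * ((Real.sqrt d + 1) * n) := by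
        rw [MeasureTheory.integral_mul_const, MeasureTheory.integral_const_mul,
          MeasureTheory.integral_add (MeasureTheory.integrable_const _) hA_int,
          MeasureTheory.integral_const]
        simp
    _ ≤ Cψ * ((1 + |ℓ|) + Real.sqrt V) * ((Real.sqrt d + 1) * n) := by
        have hfac : (0:ℝ) ≤ (Real.sqrt d + 1) * n := by positivity
        have : Cψ * ((1 + |ℓ|) + ∫ ω, A ω ∂P') ≤ Cψ * ((1 + |ℓ|) + Real.sqrt V) := by
          apply mul_le_mul_of_nonneg_left _ hCψ.le
          linarith [hA_int_bound]
        exact mul_le_mul_of_nonneg_right this hfac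
    _ = Cψ * (1 + |ℓ| + Real.sqrt V) * (Real.sqrt d + 1) * n := by ring

end GFPP
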